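/- Let u : P → Q be a Kummer homomorphism of saturated commutative monoids and write G = Q^gp/P^gp, with x̄ ∈ G the class of x ∈ Q. For every n ≥ 0 and 0 ≤ k ≤ n+1, define monoid homomorphisms b_k^n : Q ⊕ G^n → Q ⊕ G^{n+1} by b_0^n(x_0, x_1, …, x_n) = (x_0, x̄_0 − x_1 − ⋯ − x_n, x_1, …, x_n) and, for 1 ≤ k ≤ n+1, b_k^n(x_0, x_1, …, x_n) = (x_0, x_1, …, x_{k−1}, 0, x_k, …, x_n). Then the maps ∂^n := Σ_{k=0}^{n+1} (−1)^k ℤ[b_k^n] : ℤ[Q ⊕ G^n] → ℤ[Q ⊕ G^{n+1}] satisfy ∂^{n+1} ∘ ∂^n = 0, so that C := (ℤ[Q ⊕ G^n], ∂^n)_{n ≥ 0} is a cochain complex of abelian groups (with C^0 = ℤ[Q]), and the chain map from the complex consisting of ℤ[P] concentrated in degree 0 to C that is ℤ[u] : ℤ[P] → ℤ[Q] in degree 0 is a chain homotopy equivalence. -/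

import Mathlib

/-!
The maps `b_k` satisfy the cosimplicial identities `b_{j+1} ∘ b_i = b_i ∘ b_j` for `i ≤ j`, so
their alternating sums square to zero. The map `s (x, v) = (x, tail v)` when
`x̄ = v_0 + ⋯ + v_n`, and `0` otherwise, is an extra codegeneracy, `s ∘ b_0 = id` and
`s ∘ b_{k+1} = b_k ∘ s`, hence a contracting homotopy of `C` in positive degrees. In degree `0`,
`s ∘ b_1` is the projection of `ℤ[Q]` onto the span of the `x` with `x̄ = 0`, and these are
exactly the elements of `u(P)`: if `x = y` in `Q^gp` with `y ∈ P^gp`, then `n • x ∈ u(P)` by the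
Kummer property, so `n • y ∈ P` since `P^gp → Q^gp` is injective, and `y ∈ P` by saturation.
-/

noncomputable section

variable {P Q GP GQ : Type*} [AddCancelCommMonoid P] [AddCancelCommMonoid Q]
  [AddCommGroup GP] [AddCommGroup GQ]

/-- The coface maps `b_k^n : Q ⊕ G^n → Q ⊕ G^{n+1}` (where `G = Q^gp/P^gp`):
`b_0^n (x_0, x_1, …, x_n) = (x_0, x̄_0 − x_1 − ⋯ − x_n, x_1, …, x_n)` and, for
`1 ≤ k ≤ n + 1`, `b_k^n (x_0, x_1, …, x_n) = (x_0, x_1, …, x_{k−1}, 0, x_k, …, x_n)`. -/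
def cofaceMap (ιQ : Q →+ GQ) (ugp : GP →+ GQ) (n : ℕ) (k : Fin (n + 2)) :
    Q × (Fin n → GQ ⧸ ugp.range) → Q × (Fin (n + 1) → GQ ⧸ ugp.range) :=
  Fin.cases
    (fun x => (x.1,
      Fin.cons (QuotientAddGroup.mk' ugp.range (ιQ x.1) - ∑ i, x.2 i) x.2))
    (fun j x => (x.1, j.insertNth 0 x.2))
    k

/-- The alternating-sum differential `∂^n = Σ_{k=0}^{n+1} (−1)^k ℤ[b_k^n]` on the monoid
algebra `ℤ[Q ⊕ G^n]` (whose underlying abelian group is `(Q × (Fin n → G)) →₀ ℤ`). -/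
def cofaceDiff (ιQ : Q →+ GQ) (ugp : GP →+ GQ) (n : ℕ) :
    ((Q × (Fin n → GQ ⧸ ugp.range)) →₀ ℤ) →+
      ((Q × (Fin (n + 1) → GQ ⧸ ugp.range)) →₀ ℤ) :=
  ∑ k : Fin (n + 2),
    ((-1 : ℤ) ^ (k : ℕ)) • Finsupp.mapDomain.addMonoidHom (cofaceMap ιQ ugp n k)

/-- The degree-zero map `ℤ[u] : ℤ[P] → ℤ[Q] = ℤ[Q ⊕ G^0]`. -/
def cofaceAug (u : P →+ Q) (ugp : GP →+ GQ) :
    (P →₀ ℤ) →+ ((Q × (Fin 0 → GQ ⧸ ugp.range)) →₀ ℤ) :=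
  Finsupp.mapDomain.addMonoidHom (fun x => (u x, 0))

theorem Fin.succ_succAbove_succAbove_of_le {n : ℕ} {i j : Fin (n + 1)} (h : i ≤ j) (k : Fin n) :
    j.succ.succAbove (i.succAbove k) = i.castSucc.succAbove (j.succAbove k) := by
  rcases i with ⟨i, hi⟩; rcases j with ⟨j, hj⟩; rcases k with ⟨k, hk⟩
  simp only [Fin.succAbove, Fin.lt_def, Fin.ext_iff, Fin.le_def] at *
  split_ifs <;> simp_all <;> omega

theorem Fin.insertNth_succ_insertNth_of_le {β : Type*} {n : ℕ} {i j : Fin (n + 1)} (h : i ≤ j)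
    (x y : β) (v : Fin n → β) :
    Fin.insertNth (α := fun _ => β) j.succ y (Fin.insertNth (α := fun _ => β) i x v) =
      Fin.insertNth (α := fun _ => β) i.castSucc x (Fin.insertNth (α := fun _ => β) j y v) := by
  rw [Fin.eq_insertNth_iff]
  refine ⟨?_, funext fun m => ?_⟩
  · rw [← Fin.succAbove_succ_of_le _ _ h, Fin.insertNth_apply_succAbove, Fin.insertNth_apply_same]
  · show Fin.insertNth (α := fun _ => β) j.succ y _ (i.castSucc.succAbove m) = _
    induction m using Fin.succAboveCases j with
    | x => rw [Fin.succAbove_castSucc_of_le _ _ h, Fin.insertNth_apply_same,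
        Fin.insertNth_apply_same]
    | p t => rw [← Fin.succ_succAbove_succAbove_of_le h, Fin.insertNth_apply_succAbove,
        Fin.insertNth_apply_succAbove, Fin.insertNth_apply_succAbove]

theorem Fin.tail_insertNth_succ {β : Type*} {n : ℕ} (i : Fin (n + 1)) (y : β)
    (v : Fin (n + 1) → β) :
    Fin.tail (Fin.insertNth (α := fun _ => β) i.succ y v) =
      Fin.insertNth (α := fun _ => β) i y (Fin.tail v) := by
  rw [← Fin.cons_self_tail v, Fin.insertNth_succ_cons, Fin.tail_cons, Fin.tail_cons]

theorem Fin.sum_sum_neg_one_pow_smul_eq_zero {M : Type*} [AddCommGroup M] {n : ℕ}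
    (F : Fin (n + 2) → Fin (n + 3) → M)
    (hF : ∀ i j : Fin (n + 2), i ≤ j → F i j.succ = F j i.castSucc) :
    ∑ i : Fin (n + 2), ∑ j : Fin (n + 3), ((-1 : ℤ) ^ ((i : ℕ) + j)) • F i j = 0 := by
  rw [← Finset.sum_product']
  let S : Finset (Fin (n + 2) × Fin (n + 3)) := {p | (p.2 : ℕ) ≤ p.1}
  rw [Finset.univ_product_univ, ← Finset.sum_add_sum_compl S, ← eq_neg_iff_add_eq_zero,
    ← Finset.sum_neg_distrib]
  -- `(i, j) ↦ (j, i + 1)` matches the terms with `j ≤ i` with those with `i < j`, of opposite sign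
  refine Finset.sum_bij (fun p hp => (p.2.castLT ((Finset.mem_filter.mp hp).2.trans_lt p.1.2),
    p.1.succ)) ?_ ?_ ?_ ?_
  · intro p hp
    simp only [S, Finset.compl_filter, Finset.mem_filter_univ, Fin.val_succ,
      Fin.val_castLT] at hp ⊢
    omega
  · rintro ⟨i, j⟩ _ ⟨i', j'⟩ _ h
    simp only [Prod.mk.injEq, Fin.ext_iff, Fin.val_castLT, Fin.val_succ] at h ⊢
    omega
  · rintro ⟨i, j⟩ hij
    simp only [S, Finset.compl_filter, Finset.mem_filter_univ, not_le] at hij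
    have hj : j ≠ 0 := by rintro rfl; simp at hij
    refine ⟨(j.pred hj, i.castSucc), ?_, by simp⟩
    simp only [S, Finset.mem_filter_univ, Fin.val_castSucc, Fin.val_pred]
    omega
  · rintro ⟨i, j⟩ hij
    simp only [S, Finset.mem_filter_univ] at hij
    have hji : j.castLT (hij.trans_lt i.2) ≤ i := by simpa [Fin.le_def] using hij
    rw [hF _ _ hji, Fin.castSucc_castLT, ← neg_smul]
    congr 1
    simp only [Fin.val_succ, Fin.val_castLT, pow_add, pow_one]
    ring

section AlternatingCoface

variable {C : ℕ → Type*} [∀ n, AddCommGroup (C n)]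

def alternatingCoface (d : ∀ n, Fin (n + 2) → C n →+ C (n + 1)) (n : ℕ) : C n →+ C (n + 1) :=
  ∑ k : Fin (n + 2), ((-1 : ℤ) ^ (k : ℕ)) • d n k

variable (d : ∀ n, Fin (n + 2) → C n →+ C (n + 1))

theorem alternatingCoface_apply (n : ℕ) (x : C n) :
    alternatingCoface d n x = ∑ k : Fin (n + 2), ((-1 : ℤ) ^ (k : ℕ)) • d n k x := by
  simp only [alternatingCoface, AddMonoidHom.finsetSum_apply, AddMonoidHom.smul_apply]

theorem alternatingCoface_comp_alternatingCoface (n : ℕ)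
    (h : ∀ i j : Fin (n + 2), i ≤ j →
      (d (n + 1) j.succ).comp (d n i) = (d (n + 1) i.castSucc).comp (d n j)) :
    (alternatingCoface d (n + 1)).comp (alternatingCoface d n) = 0 := by
  ext x
  simp only [AddMonoidHom.comp_apply, alternatingCoface_apply, map_sum, map_zsmul,
    Finset.smul_sum, smul_smul, ← pow_add, AddMonoidHom.zero_apply]
  exact Fin.sum_sum_neg_one_pow_smul_eq_zero (fun i j => d (n + 1) j (d n i x))
    fun i j hij => DFunLike.congr_fun (h i j hij) x

theorem comp_alternatingCoface_add_alternatingCoface_comp (s : ∀ n, C (n + 1) →+ C n) (n : ℕ)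
    (h₀ : (s (n + 1)).comp (d (n + 1) 0) = AddMonoidHom.id _)
    (hs : ∀ k : Fin (n + 2), (s (n + 1)).comp (d (n + 1) k.succ) = (d n k).comp (s n)) :
    (s (n + 1)).comp (alternatingCoface d (n + 1)) + (alternatingCoface d n).comp (s n) =
      AddMonoidHom.id _ := by
  ext x
  have hs' := fun k => DFunLike.congr_fun (hs k) x
  simp only [AddMonoidHom.comp_apply] at hs'
  rw [AddMonoidHom.add_apply, AddMonoidHom.comp_apply, AddMonoidHom.comp_apply,
    alternatingCoface_apply, alternatingCoface_apply, Fin.sum_univ_succ]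
  simp only [Fin.val_zero, pow_zero, one_smul, Fin.val_succ, pow_succ', neg_one_mul, neg_smul,
    Finset.sum_neg_distrib, map_add, map_neg, map_sum, map_zsmul, hs']
  rw [← AddMonoidHom.comp_apply, h₀]
  abel

end AlternatingCoface

section Coface

variable (ιQ : Q →+ GQ) (ugp : GP →+ GQ)

@[simp]
theorem cofaceMap_zero (n : ℕ) (a : Q × (Fin n → GQ ⧸ ugp.range)) :
    cofaceMap ιQ ugp n 0 a =
      (a.1, Fin.cons (QuotientAddGroup.mk' ugp.range (ιQ a.1) - ∑ i, a.2 i) a.2) :=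
  rfl

@[simp]
theorem cofaceMap_succ (n : ℕ) (k : Fin (n + 1)) (a : Q × (Fin n → GQ ⧸ ugp.range)) :
    cofaceMap ιQ ugp n k.succ a = (a.1, k.insertNth 0 a.2) :=
  rfl

theorem cofaceMap_comp_cofaceMap (n : ℕ) {i j : Fin (n + 2)} (h : i ≤ j) :
    cofaceMap ιQ ugp (n + 1) j.succ ∘ cofaceMap ιQ ugp n i =
      cofaceMap ιQ ugp (n + 1) i.castSucc ∘ cofaceMap ιQ ugp n j := by
  funext ⟨x, v⟩
  induction i using Fin.cases with
  | zero =>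
    induction j using Fin.cases with
    | zero =>
      simp only [Function.comp_apply, cofaceMap_succ]
      simp [Fin.insertNth_zero']
    | succ t => simp [Fin.sum_insertNth]
  | succ s =>
    obtain ⟨t, rfl⟩ := Fin.exists_succ_eq.mpr (Fin.succ_pos s |>.trans_le h).ne'
    simp only [Function.comp_apply, cofaceMap_succ, ← Fin.succ_castSucc,
      Fin.insertNth_succ_insertNth_of_le (Fin.succ_le_succ_iff.mp h)]

theorem cofaceDiff_comp_cofaceDiff (n : ℕ) :
    (cofaceDiff ιQ ugp (n + 1)).comp (cofaceDiff ιQ ugp n) = 0 :=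
  alternatingCoface_comp_alternatingCoface (C := fun n => (Q × (Fin n → GQ ⧸ ugp.range)) →₀ ℤ)
    (fun n k => Finsupp.mapDomain.addMonoidHom (cofaceMap ιQ ugp n k)) n fun _ _ h => by
      simp only [← Finsupp.mapDomain.addMonoidHom_comp, cofaceMap_comp_cofaceMap ιQ ugp n h]

open scoped Classical in
def cofaceHomotopy (n : ℕ) :
    ((Q × (Fin (n + 1) → GQ ⧸ ugp.range)) →₀ ℤ) →+ ((Q × (Fin n → GQ ⧸ ugp.range)) →₀ ℤ) :=
  Finsupp.liftAddHom fun a => zmultiplesHom _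
    (if ∑ i, a.2 i = QuotientAddGroup.mk' ugp.range (ιQ a.1) then
      Finsupp.single (a.1, Fin.tail a.2) 1 else 0)

open scoped Classical in
@[simp]
theorem cofaceHomotopy_single (n : ℕ) (a : Q × (Fin (n + 1) → GQ ⧸ ugp.range)) :
    cofaceHomotopy ιQ ugp n (Finsupp.single a 1) =
      if ∑ i, a.2 i = QuotientAddGroup.mk' ugp.range (ιQ a.1) then
        Finsupp.single (a.1, Fin.tail a.2) 1 else 0 := by
  rw [cofaceHomotopy, Finsupp.liftAddHom_apply_single, zmultiplesHom_apply, one_smul]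

theorem cofaceHomotopy_comp_coface_zero (n : ℕ) :
    (cofaceHomotopy ιQ ugp n).comp (Finsupp.mapDomain.addMonoidHom (cofaceMap ιQ ugp n 0)) =
      AddMonoidHom.id _ := by
  ext a : 2
  simp [Fin.sum_cons]

theorem cofaceHomotopy_comp_coface_succ (n : ℕ) (k : Fin (n + 2)) :
    (cofaceHomotopy ιQ ugp (n + 1)).comp
        (Finsupp.mapDomain.addMonoidHom (cofaceMap ιQ ugp (n + 1) k.succ)) =
      (Finsupp.mapDomain.addMonoidHom (cofaceMap ιQ ugp n k)).comp (cofaceHomotopy ιQ ugp n) := by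
  ext ⟨x, v⟩ : 2
  simp only [AddMonoidHom.coe_comp, Function.comp_apply, Finsupp.singleAddHom_apply,
    Finsupp.mapDomain.addMonoidHom_apply, Finsupp.mapDomain_single, cofaceMap_succ,
    cofaceHomotopy_single]
  by_cases hv : ∑ i, v i = (ιQ x : GQ ⧸ ugp.range)
  · induction k using Fin.cases with
    | zero =>
      have hv0 : (ιQ x : GQ ⧸ ugp.range) - ∑ i, Fin.tail v i = v 0 := by
        rw [← hv, Fin.sum_univ_succ]
        exact add_sub_cancel_right _ _
      simp [Fin.insertNth_zero', hv, hv0]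
    | succ t => simp [Fin.sum_insertNth, Fin.tail_insertNth_succ, hv]
  · induction k using Fin.cases <;> simp [Fin.insertNth_zero', Fin.sum_insertNth, hv]

theorem cofaceHomotopy_comp_cofaceDiff_add_cofaceDiff_comp_cofaceHomotopy (n : ℕ) :
    (cofaceHomotopy ιQ ugp (n + 1)).comp (cofaceDiff ιQ ugp (n + 1)) +
      (cofaceDiff ιQ ugp n).comp (cofaceHomotopy ιQ ugp n) = AddMonoidHom.id _ :=
  comp_alternatingCoface_add_alternatingCoface_comp
    (C := fun n => (Q × (Fin n → GQ ⧸ ugp.range)) →₀ ℤ)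
    (fun n k => Finsupp.mapDomain.addMonoidHom (cofaceMap ιQ ugp n k)) (cofaceHomotopy ιQ ugp) n
    (cofaceHomotopy_comp_coface_zero ιQ ugp _) (cofaceHomotopy_comp_coface_succ ιQ ugp n)

end Coface

section Augmentation

variable (u : P →+ Q) (ιQ : Q →+ GQ) (ugp : GP →+ GQ)

theorem cofaceDiff_zero :
    cofaceDiff ιQ ugp 0 = Finsupp.mapDomain.addMonoidHom (cofaceMap ιQ ugp 0 0) -
      Finsupp.mapDomain.addMonoidHom (cofaceMap ιQ ugp 0 1) := by
  simp [cofaceDiff, Fin.sum_univ_two, sub_eq_add_neg]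

open scoped Classical in
def cofaceAugInv : ((Q × (Fin 0 → GQ ⧸ ugp.range)) →₀ ℤ) →+ (P →₀ ℤ) :=
  Finsupp.liftAddHom fun a => zmultiplesHom _
    (if h : ∃ p, u p = a.1 then Finsupp.single h.choose 1 else 0)

theorem cofaceDiff_comp_cofaceAug (hu : ∀ p, (ιQ (u p) : GQ ⧸ ugp.range) = 0) :
    (cofaceDiff ιQ ugp 0).comp (cofaceAug u ugp) = 0 := by
  have h : cofaceMap ιQ ugp 0 0 ∘ (fun p => (u p, 0)) =
      cofaceMap ιQ ugp 0 1 ∘ (fun p => (u p, 0)) := by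
    funext p
    rw [Function.comp_apply, Function.comp_apply, ← Fin.succ_zero_eq_one, cofaceMap_succ]
    simp [hu, Fin.insertNth_zero']
  rw [cofaceDiff_zero, AddMonoidHom.sub_comp, cofaceAug, ← Finsupp.mapDomain.addMonoidHom_comp,
    ← Finsupp.mapDomain.addMonoidHom_comp, h, sub_self]

theorem cofaceAugInv_comp_cofaceAug (hu : Function.Injective u) :
    (cofaceAugInv u ugp).comp (cofaceAug u ugp) = AddMonoidHom.id _ := by
  ext p : 2
  have hp : ∃ p', u p' = u p := ⟨p, rfl⟩
  simp [cofaceAug, cofaceAugInv, hp, hu hp.choose_spec]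

theorem cofaceHomotopy_zero_comp_coface_one
    (hu : ∀ x, (ιQ x : GQ ⧸ ugp.range) = 0 ↔ ∃ p, u p = x) :
    (cofaceHomotopy ιQ ugp 0).comp (Finsupp.mapDomain.addMonoidHom (cofaceMap ιQ ugp 0 1)) =
      (cofaceAug u ugp).comp (cofaceAugInv u ugp) := by
  ext ⟨x, v⟩ : 2
  obtain rfl : v = ![] := Subsingleton.elim _ _
  rw [← Fin.succ_zero_eq_one]
  simp only [AddMonoidHom.coe_comp, Function.comp_apply, Finsupp.singleAddHom_apply,
    Finsupp.mapDomain.addMonoidHom_apply, Finsupp.mapDomain_single, cofaceMap_succ,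
    cofaceHomotopy_single, Fin.sum_insertNth, Fin.sum_univ_zero, add_zero]
  by_cases hx : ∃ p, u p = x
  · simp [cofaceAug, cofaceAugInv, hx, hx.choose_spec, ((hu x).mpr hx).symm]
  · simp [cofaceAug, cofaceAugInv, hx, eq_comm (a := (0 : GQ ⧸ ugp.range)), hu]

theorem cofaceAug_comp_cofaceAugInv_add_cofaceHomotopy_comp_cofaceDiff
    (hu : ∀ x, (ιQ x : GQ ⧸ ugp.range) = 0 ↔ ∃ p, u p = x) :
    (cofaceAug u ugp).comp (cofaceAugInv u ugp) +
      (cofaceHomotopy ιQ ugp 0).comp (cofaceDiff ιQ ugp 0) = AddMonoidHom.id _ := by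
  rw [cofaceDiff_zero, AddMonoidHom.comp_sub, cofaceHomotopy_comp_coface_zero,
    cofaceHomotopy_zero_comp_coface_one u ιQ ugp hu, add_sub_cancel]

end Augmentation

section Kummer

variable {ιP : P →+ GP} {ιQ : Q →+ GQ} {u : P →+ Q} {ugp : GP →+ GQ}

theorem injective_gp_of_injective (hιQ : Function.Injective ιQ)
    (hgpP : ∀ g : GP, ∃ a b : P, g = ιP a - ιP b) (hu : Function.Injective u)
    (hugp : ∀ x : P, ugp (ιP x) = ιQ (u x)) : Function.Injective ugp := by
  refine (injective_iff_map_eq_zero ugp).mpr fun g hg => ?_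
  obtain ⟨a, b, rfl⟩ := hgpP g
  rw [map_sub, hugp, hugp, sub_eq_zero] at hg
  rw [hu (hιQ hg), sub_self]

theorem mk_eq_zero_iff_exists_eq (hιQ : Function.Injective ιQ)
    (hgpP : ∀ g : GP, ∃ a b : P, g = ιP a - ιP b)
    (hsatP : ∀ g : GP, ∀ n : ℕ, 0 < n → (∃ a : P, n • g = ιP a) → ∃ a : P, g = ιP a)
    (hu : Function.Injective u) (hkummer : ∀ q : Q, ∃ n : ℕ, 0 < n ∧ ∃ x : P, n • q = u x)
    (hugp : ∀ x : P, ugp (ιP x) = ιQ (u x)) (x : Q) :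
    (ιQ x : GQ ⧸ ugp.range) = 0 ↔ ∃ p, u p = x := by
  refine ⟨fun hx => ?_, ?_⟩
  · obtain ⟨y, hy⟩ := (QuotientAddGroup.eq_zero_iff _).mp hx
    obtain ⟨n, hn, p₀, hp₀⟩ := hkummer x
    have hny : n • y = ιP p₀ := injective_gp_of_injective hιQ hgpP hu hugp <| by
      rw [map_nsmul, hy, ← map_nsmul, hp₀, hugp]
    obtain ⟨p, rfl⟩ := hsatP y n hn ⟨p₀, hny⟩
    exact ⟨p, hιQ (by rw [← hugp, hy])⟩
  · rintro ⟨p, rfl⟩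
    exact (QuotientAddGroup.eq_zero_iff _).mpr ⟨ιP p, hugp p⟩

end Kummer

theorem niziol_contraction_chain_homotopy_equivalence_general
    (ιP : P →+ GP) (ιQ : Q →+ GQ)
    (hιQ : Function.Injective ιQ)
    (hgpP : ∀ g : GP, ∃ a b : P, g = ιP a - ιP b)
    (hsatP : ∀ g : GP, ∀ n : ℕ, 0 < n → (∃ a : P, n • g = ιP a) → ∃ a : P, g = ιP a)
    (u : P →+ Q) (huinj : Function.Injective u)
    (hkummer : ∀ q : Q, ∃ n : ℕ, 0 < n ∧ ∃ x : P, n • q = u x)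
    (ugp : GP →+ GQ) (hugp : ∀ x : P, ugp (ιP x) = ιQ (u x)) :
    (∀ n : ℕ, (cofaceDiff ιQ ugp (n + 1)).comp (cofaceDiff ιQ ugp n) = 0) ∧
    (cofaceDiff ιQ ugp 0).comp (cofaceAug u ugp) = 0 ∧
    ∃ (g : ((Q × (Fin 0 → GQ ⧸ ugp.range)) →₀ ℤ) →+ (P →₀ ℤ))
      (s : ∀ n : ℕ, ((Q × (Fin (n + 1) → GQ ⧸ ugp.range)) →₀ ℤ) →+
        ((Q × (Fin n → GQ ⧸ ugp.range)) →₀ ℤ)),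
      g.comp (cofaceAug u ugp) = AddMonoidHom.id _ ∧
      (cofaceAug u ugp).comp g + (s 0).comp (cofaceDiff ιQ ugp 0) =
        AddMonoidHom.id _ ∧
      ∀ n : ℕ, (s (n + 1)).comp (cofaceDiff ιQ ugp (n + 1)) +
        (cofaceDiff ιQ ugp n).comp (s n) = AddMonoidHom.id _ := by
  have hker := mk_eq_zero_iff_exists_eq hιQ hgpP hsatP huinj hkummer hugp
  exact ⟨cofaceDiff_comp_cofaceDiff ιQ ugp,
    cofaceDiff_comp_cofaceAug u ιQ ugp fun p => (hker (u p)).mpr ⟨p, rfl⟩,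
    cofaceAugInv u ugp, cofaceHomotopy ιQ ugp,
    cofaceAugInv_comp_cofaceAug u ugp huinj,
    cofaceAug_comp_cofaceAugInv_add_cofaceHomotopy_comp_cofaceDiff u ιQ ugp hker,
    cofaceHomotopy_comp_cofaceDiff_add_cofaceDiff_comp_cofaceHomotopy ιQ ugp⟩

/-- Nizioł's contraction.  Let `u : P → Q` be a Kummer homomorphism of
saturated commutative monoids, with group completions `ιP, ιQ` and induced map
`ugp : GP →+ GQ`; write `G = Q^gp/P^gp`.  Then the alternating sums
`∂^n = Σ (−1)^k ℤ[b_k^n]` satisfy `∂^{n+1} ∘ ∂^n = 0`, so that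
`C = (ℤ[Q ⊕ G^n], ∂^n)` is a cochain complex of abelian groups, and the chain map from
`ℤ[P]` concentrated in degree `0` to `C` given in degree `0` by `ℤ[u]` is a chain
homotopy equivalence: there is a chain-homotopy inverse `g` (necessarily satisfying
`g ∘ f = id` strictly, since the source is concentrated in degree `0` in nonnegative
cohomological degrees) together with a homotopy `s` witnessing `id ≃ f ∘ g`. -/
theorem niziol_contraction_chain_homotopy_equivalence
    (ιP : P →+ GP) (ιQ : Q →+ GQ)
    (hιP : Function.Injective ιP) (hιQ : Function.Injective ιQ)
    (hgpP : ∀ g : GP, ∃ a b : P, g = ιP a - ιP b)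
    (hgpQ : ∀ g : GQ, ∃ a b : Q, g = ιQ a - ιQ b)
    (hsatP : ∀ g : GP, ∀ n : ℕ, 0 < n → (∃ a : P, n • g = ιP a) → ∃ a : P, g = ιP a)
    (hsatQ : ∀ g : GQ, ∀ n : ℕ, 0 < n → (∃ a : Q, n • g = ιQ a) → ∃ a : Q, g = ιQ a)
    (u : P →+ Q) (huinj : Function.Injective u)
    (hkummer : ∀ q : Q, ∃ n : ℕ, 0 < n ∧ ∃ x : P, n • q = u x)
    (ugp : GP →+ GQ) (hugp : ∀ x : P, ugp (ιP x) = ιQ (u x)) :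
    (∀ n : ℕ, (cofaceDiff ιQ ugp (n + 1)).comp (cofaceDiff ιQ ugp n) = 0) ∧
    (cofaceDiff ιQ ugp 0).comp (cofaceAug u ugp) = 0 ∧
    ∃ (g : ((Q × (Fin 0 → GQ ⧸ ugp.range)) →₀ ℤ) →+ (P →₀ ℤ))
      (s : ∀ n : ℕ, ((Q × (Fin (n + 1) → GQ ⧸ ugp.range)) →₀ ℤ) →+
        ((Q × (Fin n → GQ ⧸ ugp.range)) →₀ ℤ)),
      g.comp (cofaceAug u ugp) = AddMonoidHom.id _ ∧
      (cofaceAug u ugp).comp g + (s 0).comp (cofaceDiff ιQ ugp 0) =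
        AddMonoidHom.id _ ∧
      ∀ n : ℕ, (s (n + 1)).comp (cofaceDiff ιQ ugp (n + 1)) +
        (cofaceDiff ιQ ugp n).comp (s n) = AddMonoidHom.id _ :=
  niziol_contraction_chain_homotopy_equivalence_general ιP ιQ hιQ hgpP hsatP u huinj hkummer ugp
    hugp
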